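/- Let G = (T, M, A, p, u) be a finite signaling game and let G₀ be the associated signaling game with costly monitoring evaluated at cost c = 0. For a receiver mixed strategy σ₂ on S₂^c = {0,1} × A^M × A, define the receiver mixed strategy σ₂* on S₂ = A^M by σ₂*(f) = Σ_{a₀∈A} σ₂(1, f, a₀) + (Σ_{g∈A^M} Σ_{a∈A, f = const a} σ₂(0, g, a)), i.e. all monitoring mass with plan f plus, when f is the constant map with value a, all non-monitoring mass with default action a. Then for every sender mixed strategy σ₁: both players' expected payoffs in G₀ under (σ₁, σ₂) equal their expected payoffs in G under (σ₁, σ₂*); the projection π of the outcome induced by (σ₁, σ₂) in G₀ equals the outcome induced by (σ₁, σ₂*) in G; and (σ₁, σ₂) is a Nash equilibrium of G₀ if and only if (σ₁, σ₂*) is a Nash equilibrium of G. -/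

import Mathlib

/-!
STATEMENT 13: Let `G₀` be the signaling game with costly monitoring at cost `c = 0`.
Collapsing a receiver mixed strategy `σ₂` on `{0,1} × A^M × A` to the strategy `σ₂*`
on `A^M` (monitoring mass with plan `f` plus, when `f` is constant with value `a`,
all non-monitoring mass with default `a`) preserves both players' expected payoffs,
turns the projection of the induced outcome into the induced outcome of `(σ₁, σ₂*)`,
and preserves the Nash equilibrium property in both directions.
-/

open Finset

noncomputable section

variable {T M A : Type*} [Fintype T] [Fintype M] [Fintype A]
  [DecidableEq T] [DecidableEq M] [DecidableEq A]

/-- A mixed strategy on a finite set `S` of pure strategies: a probability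
distribution on `S`. -/
def IsMixed {S : Type*} [Fintype S] (σ : S → ℝ) : Prop :=
  (∀ s, 0 ≤ σ s) ∧ ∑ s, σ s = 1

/-- The outcome (distribution on plays `T × M × A`) induced by a mixed profile in the
underlying signaling game with prior `p`. -/
def outcome (p : T → ℝ) (σ1 : (T → M) → ℝ) (σ2 : (M → A) → ℝ) :
    T × M × A → ℝ := fun w =>
  p w.1 * (∑ s1 ∈ Finset.univ.filter fun s1 : T → M => s1 w.1 = w.2.1, σ1 s1) *
    (∑ s2 ∈ Finset.univ.filter fun s2 : M → A => s2 w.2.1 = w.2.2, σ2 s2)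

/-- Expected payoff in the underlying signaling game for the payoff function `v`. -/
def payoff (p : T → ℝ) (v : T → M → A → ℝ)
    (σ1 : (T → M) → ℝ) (σ2 : (M → A) → ℝ) : ℝ :=
  ∑ w : T × M × A, outcome p σ1 σ2 w * v w.1 w.2.1 w.2.2

/-- Nash equilibrium of the underlying signaling game `G = (T, M, A, p, (u1, u2))`. -/
def IsEquilibrium (p : T → ℝ) (u1 u2 : T → M → A → ℝ)
    (σ : ((T → M) → ℝ) × ((M → A) → ℝ)) : Prop :=
  IsMixed σ.1 ∧ IsMixed σ.2 ∧
    (∀ σ1', IsMixed σ1' → payoff p u1 σ1' σ.2 ≤ payoff p u1 σ.1 σ.2) ∧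
    (∀ σ2', IsMixed σ2' → payoff p u2 σ.1 σ2' ≤ payoff p u2 σ.1 σ.2)

/-- Receiver pure strategies in the signaling game with costly monitoring:
a monitoring decision, a message-contingent plan (used when monitoring), and an
unconditional action (used when not monitoring). -/
abbrev RecvStrat (M A : Type*) := Bool × (M → A) × A

/-- The realized action of the receiver pure strategy `s2` when the message is `m`. -/
def actR (s2 : RecvStrat M A) (m : M) : A :=
  if s2.1 then s2.2.1 m else s2.2.2

/-- The outcome (distribution on plays `T × M × {0,1} × A`) induced by a mixed profile
in the signaling game with costly monitoring. -/
def outcomeC (p : T → ℝ) (σ1 : (T → M) → ℝ) (σ2 : RecvStrat M A → ℝ) :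
    T × M × Bool × A → ℝ := fun w =>
  p w.1 * (∑ s1 ∈ Finset.univ.filter fun s1 : T → M => s1 w.1 = w.2.1, σ1 s1) *
    (∑ s2 ∈ Finset.univ.filter
        fun s2 : RecvStrat M A => s2.1 = w.2.2.1 ∧ actR s2 w.2.1 = w.2.2.2, σ2 s2)

/-- The sender's expected payoff in the signaling game with costly monitoring. -/
def payoff1C (p : T → ℝ) (u1 : T → M → A → ℝ)
    (σ1 : (T → M) → ℝ) (σ2 : RecvStrat M A → ℝ) : ℝ :=
  ∑ w : T × M × Bool × A, outcomeC p σ1 σ2 w * u1 w.1 w.2.1 w.2.2.2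

/-- The receiver's expected payoff in the signaling game with costly monitoring with
cost `c`: the monitoring cost is subtracted whenever the receiver monitors. -/
def payoff2C (p : T → ℝ) (u2 : T → M → A → ℝ) (c : ℝ)
    (σ1 : (T → M) → ℝ) (σ2 : RecvStrat M A → ℝ) : ℝ :=
  ∑ w : T × M × Bool × A, outcomeC p σ1 σ2 w *
    (u2 w.1 w.2.1 w.2.2.2 - c * (if w.2.2.1 then 1 else 0))

/-- Nash equilibrium of the signaling game with costly monitoring `G_c`. -/
def IsEquilibriumC (p : T → ℝ) (u1 u2 : T → M → A → ℝ) (c : ℝ)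
    (σ : ((T → M) → ℝ) × (RecvStrat M A → ℝ)) : Prop :=
  IsMixed σ.1 ∧ IsMixed σ.2 ∧
    (∀ σ1', IsMixed σ1' → payoff1C p u1 σ1' σ.2 ≤ payoff1C p u1 σ.1 σ.2) ∧
    (∀ σ2', IsMixed σ2' → payoff2C p u2 c σ.1 σ2' ≤ payoff2C p u2 c σ.1 σ.2)

/-- The projection integrating out the monitoring decision. -/
def proj (μ : T × M × Bool × A → ℝ) : T × M × A → ℝ := fun w =>
  μ (w.1, w.2.1, false, w.2.2) + μ (w.1, w.2.1, true, w.2.2)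


def starR (σ2 : RecvStrat M A → ℝ) : (M → A) → ℝ := fun f =>
  (∑ a0 : A, σ2 (true, f, a0)) +
    ∑ g : M → A, ∑ a : A, if f = fun _ => a then σ2 (false, g, a) else 0

lemma key_sum (σ2 : RecvStrat M A → ℝ) (m : M) (a : A) :
    (∑ s2 ∈ Finset.univ.filter fun s2 : RecvStrat M A => s2.1 = false ∧ actR s2 m = a, σ2 s2) +
      (∑ s2 ∈ Finset.univ.filter fun s2 : RecvStrat M A => s2.1 = true ∧ actR s2 m = a, σ2 s2) =
      ∑ f ∈ Finset.univ.filter fun f : M → A => f m = a, starR σ2 f := by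
  classical
  simp only [Finset.sum_filter]
  simp only [starR, Fintype.sum_prod_type, Fintype.sum_bool, actR]
  simp only [Bool.false_eq_true, false_and, if_false, ite_false, Bool.true_eq_false,
    true_and, and_true, if_pos rfl, if_true, zero_add, add_zero]
  have expand : ∀ f : M → A,
      (if f m = a then ((∑ a0 : A, σ2 (true, f, a0)) +
          ∑ g : M → A, ∑ a' : A, if f = fun _ => a' then σ2 (false, g, a') else 0) else 0)
      = (if f m = a then ∑ a0 : A, σ2 (true, f, a0) else 0) +
        ∑ g : M → A, ∑ a' : A,
          if f = (fun _ => a') ∧ a' = a then σ2 (false, g, a') else 0 := by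
    intro f
    by_cases hf : f m = a
    · rw [if_pos hf, if_pos hf]
      congr 1
      refine Finset.sum_congr rfl fun g _ => Finset.sum_congr rfl fun a' _ => ?_
      by_cases hc : f = fun _ => a'
      · have : a' = a := by rw [hc] at hf; exact hf
        rw [if_pos hc, if_pos ⟨hc, this⟩]
      · rw [if_neg hc, if_neg (fun h => hc h.1)]
    · rw [if_neg hf, if_neg hf, zero_add]
      symm
      refine Finset.sum_eq_zero fun g _ => Finset.sum_eq_zero fun a' _ => ?_
      refine if_neg fun h => hf ?_
      rw [h.1]; exact h.2
  rw [Finset.sum_congr rfl fun f _ => expand f, Finset.sum_add_distrib]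
  have h2 : (∑ f : M → A, ∑ g : M → A, ∑ a' : A,
      if f = (fun _ => a') ∧ a' = a then σ2 (false, g, a') else 0)
      = ∑ g : M → A, σ2 (false, g, a) := by
    rw [Finset.sum_comm]
    refine Finset.sum_congr rfl fun g _ => ?_
    rw [Finset.sum_comm]
    have h3 : ∀ a' : A, (∑ f : M → A,
        if f = (fun _ => a') ∧ a' = a then σ2 (false, g, a') else 0)
        = if a' = a then σ2 (false, g, a') else 0 := by
      intro a'
      simp only [ite_and]
      rw [Finset.sum_ite_eq' Finset.univ (fun _ => a')
        (fun _ => if a' = a then σ2 (false, g, a') else 0)]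
      simp
    rw [Finset.sum_congr rfl fun a' _ => h3 a']
    simp
  rw [h2]
  have h4 : (∑ x : M → A, ∑ a' : A, if a' = a then σ2 (false, x, a') else 0)
      = ∑ x : M → A, σ2 (false, x, a) := by
    refine Finset.sum_congr rfl fun x _ => ?_
    simp
  rw [h4]
  have h5 : ∀ x : M → A, (∑ a0 : A, if x m = a then σ2 (true, x, a0) else 0)
      = if x m = a then ∑ a0 : A, σ2 (true, x, a0) else 0 := by
    intro x; split <;> simp
  rw [Finset.sum_congr rfl fun x _ => h5 x]
  simp only [Finset.sum_const_zero]
  ring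

lemma proj_outcomeC (p : T → ℝ) (σ1 : (T → M) → ℝ) (σ2 : RecvStrat M A → ℝ) :
    proj (outcomeC p σ1 σ2) = outcome p σ1 (starR σ2) := by
  funext w
  obtain ⟨t, m, a⟩ := w
  simp only [proj, outcomeC, outcome]
  rw [← key_sum σ2 m a]
  ring

lemma payoffC_eq (p : T → ℝ) (v : T → M → A → ℝ)
    (σ1 : (T → M) → ℝ) (σ2 : RecvStrat M A → ℝ) :
    (∑ w : T × M × Bool × A, outcomeC p σ1 σ2 w * v w.1 w.2.1 w.2.2.2)
      = payoff p v σ1 (starR σ2) := by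
  have hp := proj_outcomeC p σ1 σ2
  unfold payoff
  simp only [Fintype.sum_prod_type, Fintype.sum_bool]
  refine Finset.sum_congr rfl fun t _ => Finset.sum_congr rfl fun m _ => ?_
  rw [← Finset.sum_add_distrib]
  refine Finset.sum_congr rfl fun a _ => ?_
  have := congrFun hp (t, m, a)
  simp only [proj] at this
  rw [← this]
  ring

lemma starR_mixed (σ2 : RecvStrat M A → ℝ) (h : IsMixed σ2) : IsMixed (starR σ2) := by
  constructor
  · intro f
    refine add_nonneg (Finset.sum_nonneg fun a _ => h.1 _) ?_
    refine Finset.sum_nonneg fun g _ => Finset.sum_nonneg fun a _ => ?_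
    split
    · exact h.1 _
    · exact le_refl 0
  · have htot := h.2
    simp only [Fintype.sum_prod_type, Fintype.sum_bool] at htot
    unfold starR
    rw [Finset.sum_add_distrib]
    have h2 : (∑ f : M → A, ∑ g : M → A, ∑ a : A,
        if f = (fun _ => a) then σ2 (false, g, a) else 0)
        = ∑ g : M → A, ∑ a : A, σ2 (false, g, a) := by
      rw [Finset.sum_comm]
      refine Finset.sum_congr rfl fun g _ => ?_
      rw [Finset.sum_comm]
      refine Finset.sum_congr rfl fun a _ => ?_
      rw [Finset.sum_ite_eq' Finset.univ (fun _ => a) (fun _ => σ2 (false, g, a))]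
      simp
    rw [h2]
    linarith [htot]

def liftR (a0 : A) (σ2' : (M → A) → ℝ) : RecvStrat M A → ℝ := fun s2 =>
  if s2.1 = true ∧ s2.2.2 = a0 then σ2' s2.2.1 else 0

lemma starR_liftR (a0 : A) (σ2' : (M → A) → ℝ) : starR (liftR a0 σ2') = σ2' := by
  funext f
  simp only [starR, liftR]
  simp [Finset.sum_ite_eq']

lemma liftR_mixed (a0 : A) (σ2' : (M → A) → ℝ) (h : IsMixed σ2') :
    IsMixed (liftR a0 σ2') := by
  constructor
  · intro s
    simp only [liftR]
    split
    · exact h.1 _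
    · exact le_refl 0
  · simp only [liftR, Fintype.sum_prod_type, Fintype.sum_bool]
    simp [Finset.sum_ite_eq', h.2]

lemma payoff1C_eq (p : T → ℝ) (u1 : T → M → A → ℝ)
    (σ1 : (T → M) → ℝ) (σ2 : RecvStrat M A → ℝ) :
    payoff1C p u1 σ1 σ2 = payoff p u1 σ1 (starR σ2) :=
  payoffC_eq p u1 σ1 σ2

lemma payoff2C_zero_eq (p : T → ℝ) (u2 : T → M → A → ℝ)
    (σ1 : (T → M) → ℝ) (σ2 : RecvStrat M A → ℝ) :
    payoff2C p u2 0 σ1 σ2 = payoff p u2 σ1 (starR σ2) := by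
  rw [← payoffC_eq p u2 σ1 σ2]
  unfold payoff2C
  refine Finset.sum_congr rfl fun w _ => ?_
  rw [zero_mul, sub_zero]

/-- At zero monitoring cost, collapsing the receiver's strategy in
the monitoring game to a strategy of the underlying signaling game preserves expected
payoffs, outcomes (after projection), and Nash equilibria. -/
theorem zero_cost_monitoring_game_embeds_signaling_game
    [Nonempty T] [Nonempty M] [Nonempty A]
    (p : T → ℝ) (hp : ∀ t, 0 ≤ p t) (hp1 : ∑ t, p t = 1)
    (u1 u2 : T → M → A → ℝ)
    (σ2 : RecvStrat M A → ℝ) (hσ2 : IsMixed σ2)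
    (σ2star : (M → A) → ℝ)
    (hstar : σ2star = fun f =>
      (∑ a0 : A, σ2 (true, f, a0)) +
        ∑ g : M → A, ∑ a : A, if f = fun _ => a then σ2 (false, g, a) else 0) :
    ∀ σ1 : (T → M) → ℝ, IsMixed σ1 →
      (payoff1C p u1 σ1 σ2 = payoff p u1 σ1 σ2star ∧
        payoff2C p u2 0 σ1 σ2 = payoff p u2 σ1 σ2star) ∧
      proj (outcomeC p σ1 σ2) = outcome p σ1 σ2star ∧
      (IsEquilibriumC p u1 u2 0 (σ1, σ2) ↔ IsEquilibrium p u1 u2 (σ1, σ2star))  := by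
  have hstar' : σ2star = starR σ2 := hstar
  subst hstar'
  intro σ1 hσ1
  refine ⟨⟨payoff1C_eq p u1 σ1 σ2, payoff2C_zero_eq p u2 σ1 σ2⟩,
    proj_outcomeC p σ1 σ2, ?_⟩
  constructor
  · rintro ⟨h1, h2, h3, h4⟩
    refine ⟨h1, starR_mixed σ2 h2, ?_, ?_⟩
    · intro σ1' h'
      simp only
      rw [← payoff1C_eq, ← payoff1C_eq]
      exact h3 σ1' h'
    · intro σ2' h'
      have a0 : A := Classical.arbitrary A
      have hlift := h4 (liftR a0 σ2') (liftR_mixed a0 σ2' h')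
      rw [payoff2C_zero_eq, payoff2C_zero_eq, starR_liftR] at hlift
      exact hlift
  · rintro ⟨h1, h2, h3, h4⟩
    refine ⟨h1, hσ2, ?_, ?_⟩
    · intro σ1' h'
      simp only
      rw [payoff1C_eq, payoff1C_eq]
      exact h3 σ1' h'
    · intro σ2'' h''
      simp only
      rw [payoff2C_zero_eq, payoff2C_zero_eq]
      exact h4 (starR σ2'') (starR_mixed σ2'' h'')


end
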